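/- arXiv:1009.6154 — 2 statements merged into one kernel-verified Lean document; each statement's English description precedes it below -/
import Mathlib

section
/- For all x,y ∈ X, limsup_{j→∞} d(T^j x, T^j y) ≤ M/K. -/
theorem stmt_6 {X : Type*} [MetricSpace X] (T : X → X) (K M : ℝ)
    (hK0 : 0 < K) (hK1 : K < 1) (hM : 0 ≤ M)
    (hT : ∀ x y : X, dist (T x) (T y) ≤ (1 - K) * dist x y + M) :
    ∀ x y : X,
      Filter.limsup (fun j : ℕ => dist (T^[j] x) (T^[j] y)) Filter.atTop ≤ M / K := by
  intro x y
  have h1K : 0 ≤ 1 - K := by linarith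
  have hbound : ∀ j : ℕ, dist (T^[j] x) (T^[j] y) ≤ (1 - K)^j * dist x y + M / K := by
    intro j
    induction j with
    | zero => simp; positivity
    | succ n ih =>
      have := hT (T^[n] x) (T^[n] y)
      rw [Function.iterate_succ_apply', Function.iterate_succ_apply']
      calc dist (T (T^[n] x)) (T (T^[n] y)) ≤ (1 - K) * dist (T^[n] x) (T^[n] y) + M := this
        _ ≤ (1 - K) * ((1 - K)^n * dist x y + M / K) + M := by nlinarith
        _ = (1 - K)^(n+1) * dist x y + M / K := by field_simp; ring
  have htend : Filter.Tendsto (fun j : ℕ => (1 - K)^j * dist x y + M / K)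
      Filter.atTop (nhds (M / K)) := by
    have : Filter.Tendsto (fun j : ℕ => (1 - K)^j) Filter.atTop (nhds 0) := by
      apply tendsto_pow_atTop_nhds_zero_of_lt_one h1K (by linarith)
    have := (this.mul_const (dist x y)).add_const (M / K)
    simpa using this
  calc Filter.limsup (fun j : ℕ => dist (T^[j] x) (T^[j] y)) Filter.atTop
      ≤ Filter.limsup (fun j : ℕ => (1 - K)^j * dist x y + M / K) Filter.atTop := by
        refine Filter.limsup_le_limsup (Filter.Eventually.of_forall hbound) ?_ htend.isBoundedUnder_le
        exact Filter.isCoboundedUnder_le_of_le Filter.atTop (fun j => dist_nonneg)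
    _ = M / K := htend.limsup_eq
end

section
/- For every ε > 0 and every R ≥ 0 there exists a finite j₀ such that for all x,y ∈ X with d(x,y) ≤ R and all j ≥ j₀, d(T^j x, T^j y) ≤ M/K + ε (permanence of iterates within sets of diameter M/K + ε). -/
theorem stmt_7 {X : Type*} [MetricSpace X] (T : X → X) (K M : ℝ)
    (hK0 : 0 < K) (hK1 : K < 1) (hM : 0 ≤ M)
    (hT : ∀ x y : X, dist (T x) (T y) ≤ (1 - K) * dist x y + M) :
    ∀ ε > (0 : ℝ), ∀ R ≥ (0 : ℝ), ∃ j₀ : ℕ, ∀ x y : X, dist x y ≤ R →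
      ∀ j ≥ j₀, dist (T^[j] x) (T^[j] y) ≤ M / K + ε := by
  intro ε hε R hR
  have h1K0 : 0 ≤ 1 - K := by linarith
  have h1K1 : 1 - K < 1 := by linarith
  have key : ∀ j : ℕ, ∀ x y : X,
      dist (T^[j] x) (T^[j] y) ≤ (1 - K) ^ j * dist x y + M / K := by
    intro j
    induction j with
    | zero =>
      intro x y
      simp
      positivity
    | succ n ih =>
      intro x y
      rw [Function.iterate_succ_apply', Function.iterate_succ_apply']
      calc dist (T (T^[n] x)) (T (T^[n] y))
          ≤ (1 - K) * dist (T^[n] x) (T^[n] y) + M := hT _ _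
        _ ≤ (1 - K) * ((1 - K) ^ n * dist x y + M / K) + M := by
            nlinarith [ih x y]
        _ = (1 - K) ^ (n + 1) * dist x y + M / K := by
            field_simp; ring
  -- pick j₀
  have htend : Filter.Tendsto (fun n : ℕ => (1 - K) ^ n * R) Filter.atTop (nhds 0) := by
    have := tendsto_pow_atTop_nhds_zero_of_lt_one h1K0 h1K1
    simpa using this.mul_const R
  obtain ⟨j₀, hj₀⟩ := (htend.eventually (gt_mem_nhds hε)).exists_forall_of_atTop
  refine ⟨j₀, fun x y hxy j hj => ?_⟩
  have hpow : (1 - K) ^ j * dist x y ≤ (1 - K) ^ j₀ * R := by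
    have := pow_le_pow_of_le_one h1K0 (le_of_lt h1K1) hj
    exact mul_le_mul this hxy dist_nonneg (pow_nonneg h1K0 _)
  have := hj₀ j₀ (le_refl _)
  calc dist (T^[j] x) (T^[j] y) ≤ (1 - K) ^ j * dist x y + M / K := key j x y
    _ ≤ (1 - K) ^ j₀ * R + M / K := by linarith
    _ ≤ M / K + ε := by have := hj₀ j₀ (le_refl j₀); linarith
end
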